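/- arXiv:2503.15029 — 2 statements merged into one kernel-verified Lean document; each statement's English description precedes it below -/
import Mathlib

section
/- (RoPE relative-position property, Corollary 1.) Let d ≥ 1, let θ_l = 10000^(−l/d) for l = 0, …, d−1, and let Q, K ∈ ℝ^(2d). For positions m, n ∈ ℝ, the RoPE-embedded inner product satisfies ⟨f→(Q, m), f→(K, n)⟩ = ⟨Q, B((n − m)·θ) K⟩, where (n − m)·θ is the family l ↦ (n − m)θ_l; in particular the inner product depends on the positions m, n only through their difference m − n. -/
open Real Matrix

/-- The 2×2 rotation matrix `R(θ) = [[cos θ, −sin θ], [sin θ, cos θ]]`. -/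
noncomputable def Rmat (θ : ℝ) : Matrix (Fin 2) (Fin 2) ℝ :=
  !![Real.cos θ, -Real.sin θ; Real.sin θ, Real.cos θ]

/-- The `(2d)×(2d)` block-diagonal matrix whose `l`-th 2×2 diagonal block is `R(φ l)`. -/
noncomputable def Bmat {d : ℕ} (φ : Fin d → ℝ) : Matrix (Fin 2 × Fin d) (Fin 2 × Fin d) ℝ :=
  Matrix.blockDiagonal fun l => Rmat (φ l)

/-- RoPE base frequencies `θ_l = 10000 ^ (−l/d)`. -/
noncomputable def ropeFreq (d : ℕ) (l : Fin d) : ℝ :=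
  (10000 : ℝ) ^ (-(l : ℝ) / (d : ℝ))

/-- The RoPE embedding of `X ∈ ℝ^(2d)` at position `m`: `f→(X, m) = B(m·θ) X`. -/
noncomputable def fRoPE {d : ℕ} (X : Fin 2 × Fin d → ℝ) (m : ℝ) : Fin 2 × Fin d → ℝ :=
  (Bmat fun l => m * ropeFreq d l).mulVec X

lemma Rmat_transpose (θ : ℝ) : (Rmat θ)ᵀ = Rmat (-θ) := by
  ext i j
  fin_cases i <;> fin_cases j <;> simp [Rmat]

lemma Rmat_mul (θ ψ : ℝ) : Rmat θ * Rmat ψ = Rmat (θ + ψ) := by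
  simp only [Rmat, Matrix.mul_fin_two, Real.cos_add, Real.sin_add]
  congr 1 <;> ring_nf

lemma Bmat_transpose {d : ℕ} (φ : Fin d → ℝ) : (Bmat φ)ᵀ = Bmat fun l => -φ l := by
  simp [Bmat, Matrix.blockDiagonal_transpose, Rmat_transpose]

lemma Bmat_mul {d : ℕ} (φ ψ : Fin d → ℝ) :
    Bmat φ * Bmat ψ = Bmat fun l => φ l + ψ l := by
  rw [Bmat, Bmat, Bmat, ← Matrix.blockDiagonal_mul]
  exact congrArg _ (funext fun l => Rmat_mul _ _)

/-- RoPE relative-position property: the RoPE-embedded inner product satisfies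
`⟨f→(Q, m), f→(K, n)⟩ = ⟨Q, B((n − m)·θ) K⟩`, so it depends on `m, n` only through
their difference. -/
theorem rope_relative {d : ℕ} (hd : 1 ≤ d) (Q K : Fin 2 × Fin d → ℝ) (m n : ℝ) :
    fRoPE Q m ⬝ᵥ fRoPE K n = Q ⬝ᵥ (Bmat fun l => (n - m) * ropeFreq d l).mulVec K := by
  unfold fRoPE
  rw [Matrix.dotProduct_mulVec, ← Matrix.mulVec_transpose, Matrix.mulVec_mulVec]
  conv_rhs => rw [Matrix.dotProduct_mulVec, ← Matrix.mulVec_transpose]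
  have hB : (Bmat fun l => n * ropeFreq d l)ᵀ * (Bmat fun l => m * ropeFreq d l)
      = (Bmat fun l => (n - m) * ropeFreq d l)ᵀ := by
    rw [Bmat_transpose, Bmat_transpose, Bmat_mul]
    exact congrArg Bmat (funext fun l => by ring)
  rw [hB]
end

section
/- (Translation invariance of RoPE attention scores.) Let d ≥ 1, let θ_l = 10000^(−l/d) for l = 0, …, d−1, and let Q, K ∈ ℝ^(2d). Then for all positions m, n ∈ ℝ and every shift s ∈ ℝ, ⟨f→(Q, m + s), f→(K, n + s)⟩ = ⟨f→(Q, m), f→(K, n)⟩. -/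
open Real Matrix

lemma Rmat_transpose_mul (a b : ℝ) : (Rmat a)ᵀ * Rmat b = Rmat (b - a) := by
  ext i j
  fin_cases i <;> fin_cases j <;>
    simp [Rmat, Matrix.mul_apply, Matrix.transpose_apply, Fin.sum_univ_two, Matrix.vecHead, Matrix.vecTail,
      Real.cos_sub, Real.sin_sub] <;> ring

lemma Bmat_transpose_mul {d : ℕ} (φ ψ : Fin d → ℝ) :
    (Bmat φ)ᵀ * Bmat ψ = Bmat fun l => ψ l - φ l := by
  simp only [Bmat, Matrix.blockDiagonal_transpose, ← Matrix.blockDiagonal_mul,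
    Rmat_transpose_mul]

lemma dot_mulVec_mulVec {d : ℕ} (A B : Matrix (Fin 2 × Fin d) (Fin 2 × Fin d) ℝ)
    (Q K : Fin 2 × Fin d → ℝ) :
    A.mulVec Q ⬝ᵥ B.mulVec K = Q ⬝ᵥ (Aᵀ * B).mulVec K := by
  rw [← Matrix.mulVec_mulVec, Matrix.dotProduct_mulVec, Matrix.dotProduct_mulVec,
    ← Matrix.vecMul_transpose, Matrix.vecMul_vecMul, Matrix.dotProduct_mulVec, Matrix.vecMul_vecMul]

/-- Translation invariance of RoPE attention scores:
`⟨f→(Q, m + s), f→(K, n + s)⟩ = ⟨f→(Q, m), f→(K, n)⟩`. -/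
theorem rope_shift_invariant {d : ℕ} (hd : 1 ≤ d) (Q K : Fin 2 × Fin d → ℝ) (m n s : ℝ) :
    fRoPE Q (m + s) ⬝ᵥ fRoPE K (n + s) = fRoPE Q m ⬝ᵥ fRoPE K n := by
  unfold fRoPE
  rw [dot_mulVec_mulVec, dot_mulVec_mulVec, Bmat_transpose_mul, Bmat_transpose_mul]
  have h : (fun l => (n + s) * ropeFreq d l - (m + s) * ropeFreq d l)
      = fun l => n * ropeFreq d l - m * ropeFreq d l := by funext l; ring
  rw [h]
end
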